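/- Let H be a simple contracted minimal Q-triconnected graph. If e is an edge of H such that neither endpoint of e belongs to Q, then e is nonremovable. -/

import Mathlib

open SimpleGraph

universe u

variable {V : Type u}

/-- Two walks with the same endpoints are internally vertex-disjoint. -/
def IntDisjoint {G : SimpleGraph V} {x y : V} (p q : G.Walk x y) : Prop :=
  ∀ v ∈ p.support, v ∈ q.support → v = x ∨ v = y

/-- There are `k` pairwise internally vertex-disjoint `x`-`y` paths in `G`. -/
def ConnK (G : SimpleGraph V) (k : ℕ) (x y : V) : Prop :=
  ∃ P : Fin k → G.Walk x y, (∀ i, (P i).IsPath) ∧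
    ∀ i j, i ≠ j → IntDisjoint (P i) (P j)

/-- `G` is `(Q,r)`-vertex-connected. -/
def QRConn (G : SimpleGraph V) (Q : Set V) (r : V → ℕ) : Prop :=
  ∀ x ∈ Q, ∀ y ∈ Q, x ≠ y → ConnK G (min (r x) (r y)) x y

/-- Delete a vertex (isolate it). -/
def delV (G : SimpleGraph V) (v : V) : SimpleGraph V where
  Adj a b := G.Adj a b ∧ a ≠ v ∧ b ≠ v
  symm := ⟨by intro a b h; exact ⟨h.1.symm, h.2.2, h.2.1⟩⟩
  loopless := ⟨by intro a h; exact G.ne_of_adj h.1 rfl⟩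

/-- `G` is minimally `(Q,r)`-vertex-connected: it is `(Q,r)`-vertex-connected but
deleting any edge or any vertex destroys this property. -/
def MinQR (G : SimpleGraph V) (Q : Set V) (r : V → ℕ) : Prop :=
  QRConn G Q r ∧ (∀ e ∈ G.edgeSet, ¬ QRConn (G.deleteEdges {e}) Q r) ∧
    ∀ v : V, ¬ QRConn (delV G v) Q r

/-- Biconnected: at least 3 vertices, connected, and no cut vertex. -/
def Biconnected (G : SimpleGraph V) : Prop :=
  3 ≤ Nat.card V ∧ G.Connected ∧ ∀ v : V, (SimpleGraph.induce {w | w ≠ v} G).Connected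

/-- Three-vertex-connected: more than 3 vertices and removing any at most 2
vertices leaves the graph connected. -/
def ThreeConnected (G : SimpleGraph V) : Prop :=
  4 ≤ Nat.card V ∧ ∀ s : Set V, s.ncard ≤ 2 → (SimpleGraph.induce sᶜ G).Connected

/-- Degree of a vertex. -/
noncomputable def vdeg (G : SimpleGraph V) (v : V) : ℕ := (G.neighborSet v).ncard

/-- The contracted version of `G`: suppress all degree-2 vertices.  Two vertices of
degree `≠ 2` are adjacent iff they are joined by a path all of whose internal
vertices have degree 2. -/
def suppress (G : SimpleGraph V) : SimpleGraph {v : V // vdeg G v ≠ 2} where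
  Adj u v := u ≠ v ∧ ∃ p : G.Walk u.1 v.1, p.IsPath ∧
      ∀ w ∈ p.support, w ≠ u.1 → w ≠ v.1 → vdeg G w = 2
  symm := ⟨by
    rintro u v ⟨hne, p, hp, hint⟩
    refine ⟨hne.symm, p.reverse, hp.reverse, ?_⟩
    intro w hw h1 h2
    rw [SimpleGraph.Walk.support_reverse, List.mem_reverse] at hw
    exact hint w hw h2 h1⟩
  loopless := ⟨by intro u h; exact h.1 rfl⟩

/-- The removal operation of Holton–Jackson–Saito–Wormald: delete the edge `uv`,
suppress any resulting degree-2 vertices and simplify parallel edges; the edge is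
removable when the result is three-connected. -/
def Removable (G : SimpleGraph V) (u v : V) : Prop :=
  ThreeConnected (suppress (G.deleteEdges {s(u, v)}))

/-!
Suppose `H ⊖ uv` were triconnected and let `G = H - uv`. By minimality some terminals `x, y`
are not joined by three internally disjoint paths in `G`. Since `H` is contracted, only `u`
and `v` can have degree 2 in `G`, and they are not adjacent there. If one of them, `w`, is a
common neighbour of `x` and `y`, then `x w y` can replace the only `H`-path through `w`.
Otherwise every edge of the suppressed graph is an edge of `G` or is subdivided once, so the
three internally disjoint `x`–`y` paths that Menger's theorem provides in the triconnected
suppressed graph lift to `G`; two lifts could only share a subdividing vertex that is a common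
neighbour of `x` and `y`. Menger's theorem is proved by Göring's induction on the edges.
-/

namespace SimpleGraph

variable {G H : SimpleGraph V} {A B S T X : Set V} {k : ℕ} {a b p q : V}

namespace Walk

lemma exists_forall_mem_takeUntil [DecidableEq V] (w : G.Walk a b) (X : Set V)
    (h : ∃ x ∈ w.support, x ∈ X) :
    ∃ s ∈ X, ∃ hs : s ∈ w.support, ∀ z ∈ (w.takeUntil s hs).support, z ∈ X → z = s := by
  induction w with
  | nil =>
    obtain ⟨x, hx, hxX⟩ := h
    rw [support_nil, List.mem_singleton] at hx
    subst hx
    exact ⟨x, hxX, start_mem_support _, by simp⟩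
  | @cons a c b hadj w ih =>
    by_cases ha : a ∈ X
    · exact ⟨a, ha, start_mem_support _, by simp [takeUntil_first]⟩
    · obtain ⟨s, hsX, hs, hfirst⟩ := ih (by simpa [ha] using h)
      have has : a ≠ s := fun h => ha (h ▸ hsX)
      refine ⟨s, hsX, List.mem_cons_of_mem _ hs, ?_⟩
      rw [takeUntil_cons hs has]
      simp only [support_cons, List.mem_cons, forall_eq_or_imp]
      exact ⟨fun haX => absurd haX ha, hfirst⟩

lemma IsPath.append {c : V} {w₁ : G.Walk a b} {w₂ : G.Walk b c} (h₁ : w₁.IsPath)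
    (h₂ : w₂.IsPath) (h : ∀ z ∈ w₁.support, z ∈ w₂.support → z = b) :
    (w₁.append w₂).IsPath := by
  rw [isPath_def, support_append, List.nodup_append]
  refine ⟨h₁.support_nodup, h₂.support_nodup.sublist (List.tail_sublist _), ?_⟩
  rintro z hz₁ z' hz₂ rfl
  have hb : b ∉ w₂.support.tail := by
    have := h₂.support_nodup
    rw [← w₂.cons_tail_support, List.nodup_cons] at this
    exact this.1
  exact hb (h z hz₁ (List.mem_of_mem_tail hz₂) ▸ hz₂)

lemma mk_notMem_edges_of_forall_eq {w : G.Walk a b} {s : V} (hpq : p ≠ q) (hp : p ∈ X)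
    (hq : q ∈ X) (h : ∀ z ∈ w.support, z ∈ X → z = s) : s(p, q) ∉ w.edges := fun he =>
  hpq <| (h p (w.fst_mem_support_of_mem_edges he) hp).trans
    (h q (w.snd_mem_support_of_mem_edges he) hq).symm

end Walk

def Separates (G : SimpleGraph V) (S A B : Set V) : Prop :=
  ∀ a ∈ A, ∀ b ∈ B, ∀ w : G.Walk a b, ∃ s ∈ w.support, s ∈ S

def reachAvoiding (G : SimpleGraph V) (S A : Set V) : Set V :=
  {v | ∃ a ∈ A, ∃ w : G.Walk a v, ∀ z ∈ w.support, z ∉ S}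

lemma Separates.symm (h : G.Separates S A B) : G.Separates S B A := fun b hb a ha w => by
  simpa using h a ha b hb w.reverse

lemma notMem_of_mem_reachAvoiding {v : V} (h : v ∈ G.reachAvoiding S A) : v ∉ S := by
  obtain ⟨a, -, w, hw⟩ := h
  exact hw v w.end_mem_support

lemma Separates.disjoint_reachAvoiding (h : G.Separates S A B) :
    Disjoint (G.reachAvoiding S A) (G.reachAvoiding S B) := by
  rw [Set.disjoint_left]
  rintro v ⟨a, ha, w, hw⟩ ⟨b, hb, w', hw'⟩
  obtain ⟨s, hs, hsS⟩ := h a ha b hb (w.append w'.reverse)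
  rw [Walk.mem_support_append_iff, Walk.support_reverse, List.mem_reverse] at hs
  exact hs.elim (hw s · hsS) (hw' s · hsS)

lemma Separates.insert_of_deleteEdges (h : (G.deleteEdges {s(p, q)}).Separates S A B) :
    G.Separates (insert p S) A B := by
  intro a ha b hb w
  by_cases he : s(p, q) ∈ w.edges
  · exact ⟨p, w.fst_mem_support_of_mem_edges he, Set.mem_insert _ _⟩
  · obtain ⟨s, hs, hsS⟩ := h a ha b hb (w.toDeleteEdge _ he)
    exact ⟨s, by simpa using hs, Set.mem_insert_of_mem _ hsS⟩

lemma exists_mem_reachAvoiding_deleteEdges (hpq : p ≠ q) (ha : a ∈ A) (w : G.Walk a b)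
    (hw : ∀ z ∈ w.support, z ∉ S) (hmeet : p ∈ w.support ∨ q ∈ w.support) :
    ∃ s, (s = p ∨ s = q) ∧ s ∈ (G.deleteEdges {s(p, q)}).reachAvoiding S A := by
  classical
  obtain ⟨s, hs, hsw, hfirst⟩ := w.exists_forall_mem_takeUntil {p, q}
    (hmeet.elim (⟨p, ·, by simp⟩) (⟨q, ·, by simp⟩))
  have he := Walk.mk_notMem_edges_of_forall_eq hpq (by simp) (by simp) hfirst
  refine ⟨s, hs, a, ha, (w.takeUntil s hsw).toDeleteEdge _ he, fun z hz => ?_⟩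
  exact hw z (w.support_takeUntil_subset_support hsw (by simpa using hz))

lemma exists_reachAvoiding_of_not_separates (hpq : p ≠ q)
    (hS : (G.deleteEdges {s(p, q)}).Separates S A B) (hnS : ¬ G.Separates S A B) :
    (p ∈ (G.deleteEdges {s(p, q)}).reachAvoiding S A ∧
        q ∈ (G.deleteEdges {s(p, q)}).reachAvoiding S B) ∨
      (q ∈ (G.deleteEdges {s(p, q)}).reachAvoiding S A ∧
        p ∈ (G.deleteEdges {s(p, q)}).reachAvoiding S B) := by
  simp only [Separates, not_forall, not_exists, not_and] at hnS
  obtain ⟨a, ha, b, hb, w, hw⟩ := hnS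
  have hmeet : p ∈ w.support ∨ q ∈ w.support := by
    by_contra! h
    have he : s(p, q) ∉ w.edges := fun he => h.1 (w.fst_mem_support_of_mem_edges he)
    obtain ⟨s, hs, hsS⟩ := hS a ha b hb (w.toDeleteEdge _ he)
    exact hw s (by simpa using hs) hsS
  obtain ⟨s, hs, hsA⟩ := exists_mem_reachAvoiding_deleteEdges hpq ha w hw hmeet
  obtain ⟨t, ht, htB⟩ := exists_mem_reachAvoiding_deleteEdges hpq hb w.reverse
    (by simpa using hw) (by simpa using hmeet)
  have hst : s ≠ t := fun h => hS.disjoint_reachAvoiding.ne_of_mem hsA htB h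
  rcases hs with rfl | rfl <;> rcases ht with rfl | rfl
  exacts [absurd rfl hst, .inl ⟨hsA, htB⟩, .inr ⟨hsA, htB⟩, absurd rfl hst]

/-- Cut an `A`–`B` walk at its first vertex in `{q} ∪ insert p S`: it cannot be `q`, which is
not on the `A`-side of `S`, so the cut walk is an `A`–`insert p S` walk of `G - pq`. -/
lemma Separates.of_separates_insert (hpq : p ≠ q)
    (hq : q ∉ (G.deleteEdges {s(p, q)}).reachAvoiding S A) (hqS : q ∉ S)
    (hsep : G.Separates (insert p S) A B)
    (hT : (G.deleteEdges {s(p, q)}).Separates T A (insert p S)) : G.Separates T A B := by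
  classical
  intro a ha b hb w
  obtain ⟨s, hsX, hsw, hfirst⟩ := w.exists_forall_mem_takeUntil (insert q (insert p S)) <| by
    obtain ⟨s, hs, hsS⟩ := hsep a ha b hb w
    exact ⟨s, hs, Set.mem_insert_of_mem _ hsS⟩
  have he := Walk.mk_notMem_edges_of_forall_eq hpq (by simp) (by simp) hfirst
  rcases hsX with rfl | hsS
  · refine absurd ⟨a, ha, (w.takeUntil s hsw).toDeleteEdge _ he, fun z hz hzS => ?_⟩ hq
    rw [Walk.support_transfer] at hz
    exact hqS (hfirst z hz (by simp [hzS]) ▸ hzS)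
  · obtain ⟨t, ht, htT⟩ := hT a ha s hsS ((w.takeUntil s hsw).toDeleteEdge _ he)
    rw [Walk.support_transfer] at ht
    exact ⟨t, w.support_takeUntil_subset_support hsw ht, htT⟩

structure DisjointPaths (G : SimpleGraph V) (A B : Set V) (k : ℕ) where
  src : Fin k → V
  tgt : Fin k → V
  walk : ∀ i, G.Walk (src i) (tgt i)
  src_mem : ∀ i, src i ∈ A
  tgt_mem : ∀ i, tgt i ∈ B
  isPath : ∀ i, (walk i).IsPath
  disjoint : Pairwise fun i j => (walk i).support.Disjoint (walk j).support

namespace DisjointPaths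

def mono (P : G.DisjointPaths A B k) (h : G ≤ H) : H.DisjointPaths A B k where
  src := P.src
  tgt := P.tgt
  walk i := (P.walk i).mapLe h
  src_mem := P.src_mem
  tgt_mem := P.tgt_mem
  isPath i := (P.isPath i).mapLe h
  disjoint i j hij := by simpa [Walk.support_mapLe_eq_support] using P.disjoint hij

@[simp]
lemma support_walk_mono (P : G.DisjointPaths A B k) (h : G ≤ H) (i : Fin k) :
    ((P.mono h).walk i).support = (P.walk i).support :=
  Walk.support_mapLe_eq_support h (P.walk i)

def IsTight (P : G.DisjointPaths A B k) : Prop :=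
  ∀ i, ∀ z ∈ (P.walk i).support, z ∈ B → z = P.tgt i

lemma IsTight.mono {P : G.DisjointPaths A B k} (hP : P.IsTight) (h : G ≤ H) :
    (P.mono h).IsTight :=
  fun i z hz => hP i z (by rwa [support_walk_mono] at hz)

lemma tgt_injective (P : G.DisjointPaths A B k) : Function.Injective P.tgt := by
  intro i j h
  by_contra hij
  exact P.disjoint hij (P.walk i).end_mem_support (by rw [h]; exact (P.walk j).end_mem_support)

lemma exists_isTight (P : G.DisjointPaths A B k) : ∃ P' : G.DisjointPaths A B k, P'.IsTight := by
  classical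
  choose t ht hts hfirst using fun i =>
    (P.walk i).exists_forall_mem_takeUntil B ⟨_, (P.walk i).end_mem_support, P.tgt_mem i⟩
  exact ⟨{ src := P.src, tgt := t
           walk i := (P.walk i).takeUntil (t i) (hts i)
           src_mem := P.src_mem, tgt_mem := ht
           isPath i := (P.isPath i).takeUntil _
           disjoint i j hij := List.disjoint_of_subset_left
             ((P.walk i).support_takeUntil_subset_support _)
             (List.disjoint_of_subset_right ((P.walk j).support_takeUntil_subset_support _)
               (P.disjoint hij)) }, hfirst⟩

lemma IsTight.mem_reachAvoiding {P : G.DisjointPaths A X k} (hP : P.IsTight) (hSX : S ⊆ X)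
    {i : Fin k} {z : V} (hz : z ∈ (P.walk i).support) (hzt : z ≠ P.tgt i) :
    z ∈ G.reachAvoiding S A := by
  classical
  refine ⟨P.src i, P.src_mem i, (P.walk i).takeUntil z hz, fun y hy hyS => ?_⟩
  obtain rfl := hP i y ((P.walk i).support_takeUntil_subset_support hz hy) (hSX hyS)
  exact Walk.endpoint_notMem_support_takeUntil (P.isPath i) hz hzt.symm hy

lemma IsTight.exists_extend {Q : G.DisjointPaths B (insert q S) k} (hQ : Q.IsTight)
    (hqp : G.Adj q p) (hqS : q ∉ S) (hp : ∀ i, p ∉ (Q.walk i).support) :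
    ∃ Q' : G.DisjointPaths B (insert p S) k, Q'.IsTight ∧
      ∀ i, ∀ z ∈ (Q'.walk i).support, z ∈ (Q.walk i).support ∨ z = p := by
  have hext : ∀ i, ∃ t ∈ insert p S, ∃ w : G.Walk (Q.src i) t, w.IsPath ∧
      (∀ z ∈ w.support, z ∈ insert p S → z = t) ∧
      ∀ z ∈ w.support, z ∈ (Q.walk i).support ∨ (z = p ∧ Q.tgt i = q) := by
    intro i
    by_cases hi : Q.tgt i = q
    · refine ⟨p, Set.mem_insert _ _, (Q.walk i).concat (by rwa [hi]),
        (Q.isPath i).concat (hp i) _, fun z hz hzX => ?_, fun z hz => ?_⟩ <;>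
        rw [Walk.support_concat, List.mem_append, List.mem_singleton] at hz
      · rcases hz with hz | rfl
        · rcases hzX with rfl | hzS
          · exact absurd hz (hp i)
          · exact absurd (hi ▸ hQ i z hz (Set.mem_insert_of_mem _ hzS) ▸ hzS) hqS
        · rfl
      · exact hz.imp_right (⟨·, hi⟩)
    · refine ⟨Q.tgt i, Set.mem_insert_of_mem _ ((Q.tgt_mem i).resolve_left hi), Q.walk i,
        Q.isPath i, fun z hz hzX => ?_, fun z hz => .inl hz⟩
      rcases hzX with rfl | hzS
      · exact absurd hz (hp i)
      · exact hQ i z hz (Set.mem_insert_of_mem _ hzS)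
  choose t ht w hw hfirst hsub using hext
  refine ⟨⟨Q.src, t, w, Q.src_mem, ht, hw, fun i j hij z hzi hzj => ?_⟩, hfirst,
    fun i z hz => (hsub i z hz).imp_right And.left⟩
  rcases hsub i z hzi with hzi | ⟨rfl, hqi⟩ <;> rcases hsub j z hzj with hzj | ⟨hzp, hqj⟩
  · exact Q.disjoint hij hzi hzj
  · exact hp i (hzp ▸ hzi)
  · exact hp j hzj
  · exact hij (Q.tgt_injective (hqi.trans hqj.symm))

lemma IsTight.glue {P : G.DisjointPaths A X k} {Q : G.DisjointPaths B X k} (hP : P.IsTight)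
    (hQ : Q.IsTight) [Finite X] (hX : X.ncard ≤ k)
    (hPQ : ∀ i j, ∀ z ∈ (P.walk i).support, z ∈ (Q.walk j).support → z ∈ X) :
    Nonempty (G.DisjointPaths A B k) := by
  have hsurj : ∀ i, ∃ j, Q.tgt j = P.tgt i := by
    have hbij := Function.Injective.bijective_of_nat_card_le
      (f := fun j => (⟨Q.tgt j, Q.tgt_mem j⟩ : X))
      (fun i j h => Q.tgt_injective (congrArg Subtype.val h))
      (by simpa [Nat.card_coe_set_eq] using hX)
    intro i
    obtain ⟨j, hj⟩ := hbij.2 ⟨P.tgt i, P.tgt_mem i⟩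
    exact ⟨j, congrArg Subtype.val hj⟩
  choose σ hσ using hsurj
  have hσinj : Function.Injective σ := fun i j h =>
    P.tgt_injective (by rw [← hσ i, ← hσ j, h])
  have hmem : ∀ i z, z ∈ ((P.walk i).append ((Q.walk (σ i)).reverse.copy (hσ i) rfl)).support ↔
      z ∈ (P.walk i).support ∨ z ∈ (Q.walk (σ i)).support := by
    intro i z
    rw [Walk.mem_support_append_iff, Walk.support_copy, Walk.support_reverse, List.mem_reverse]
  have hmeet : ∀ i j z, z ∈ (P.walk i).support → z ∈ (Q.walk (σ j)).support → i = j := by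
    intro i j z hzP hzQ
    have hzX := hPQ i (σ j) z hzP hzQ
    exact P.tgt_injective ((hP i z hzP hzX).symm.trans ((hQ _ z hzQ hzX).trans (hσ j)))
  refine ⟨{ src := P.src, tgt := fun i => Q.src (σ i)
            walk i := (P.walk i).append ((Q.walk (σ i)).reverse.copy (hσ i) rfl)
            src_mem := P.src_mem, tgt_mem i := Q.src_mem (σ i)
            isPath i := ?_, disjoint i j hij z hzi hzj := ?_ }⟩
  · refine Walk.IsPath.append (P.isPath i) (by simpa using (Q.isPath (σ i)).reverse) ?_
    intro z hzP hzQ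
    rw [Walk.support_copy, Walk.support_reverse, List.mem_reverse] at hzQ
    exact hP i z hzP (hPQ i (σ i) z hzP hzQ)
  · rw [hmem] at hzi hzj
    rcases hzi with hzi | hzi <;> rcases hzj with hzj | hzj
    · exact P.disjoint hij hzi hzj
    · exact hij (hmeet i j z hzi hzj)
    · exact hij (hmeet j i z hzj hzi).symm
    · exact Q.disjoint (hσinj.ne hij) hzi hzj

lemma nonempty_of_le_ncard_inter [Finite V] (h : k ≤ (A ∩ B).ncard) :
    Nonempty (G.DisjointPaths A B k) := by
  classical
  have := Fintype.ofFinite ↥(A ∩ B)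
  obtain ⟨f⟩ := Function.Embedding.nonempty_of_card_le (α := Fin k) (β := ↥(A ∩ B))
    (by rwa [Fintype.card_fin, ← Nat.card_eq_fintype_card, Nat.card_coe_set_eq])
  exact ⟨{ src i := f i, tgt i := f i, walk _ := .nil
           src_mem i := (f i).2.1, tgt_mem i := (f i).2.2, isPath _ := .nil
           disjoint i j hij z hzi hzj := by
             simp only [Walk.support_nil, List.mem_singleton] at hzi hzj
             exact hij (f.injective (Subtype.ext (hzi.symm.trans hzj))) }⟩

end DisjointPaths

/-- Göring's induction step. By induction, `G - pq` has `k` disjoint paths from `A` to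
`insert p S` and from `B` to `insert q S`; they meet only in `S`, so joining them there and
along `pq` gives `k` disjoint `A`–`B` paths. -/
lemma menger_step [Finite V] (hpq : G.Adj p q)
    (hS : (G.deleteEdges {s(p, q)}).Separates S A B) (hSk : S.ncard < k)
    (hpA : p ∈ (G.deleteEdges {s(p, q)}).reachAvoiding S A)
    (hqB : q ∈ (G.deleteEdges {s(p, q)}).reachAvoiding S B)
    (hk : ∀ T, G.Separates T A B → k ≤ T.ncard)
    (ih : ∀ A' B' : Set V, (∀ T, (G.deleteEdges {s(p, q)}).Separates T A' B' → k ≤ T.ncard) →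
      Nonempty ((G.deleteEdges {s(p, q)}).DisjointPaths A' B' k)) :
    Nonempty (G.DisjointPaths A B k) := by
  have hdisj := hS.disjoint_reachAvoiding
  have hpS := notMem_of_mem_reachAvoiding hpA
  have hqS := notMem_of_mem_reachAvoiding hqB
  have hpB := Set.disjoint_left.1 hdisj hpA
  have hqA := Set.disjoint_right.1 hdisj hqB
  have hS' : (G.deleteEdges {s(q, p)}).Separates S B A := by rw [Sym2.eq_swap]; exact hS.symm
  obtain ⟨P, hP⟩ := (ih A (insert p S) fun T hT => hk T <|
    Separates.of_separates_insert hpq.ne hqA hqS hS.insert_of_deleteEdges hT).some.exists_isTight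
  obtain ⟨Q, hQ⟩ := (ih B (insert q S) fun T hT => hk T <| Separates.symm <|
    Separates.of_separates_insert hpq.ne.symm (by rwa [Sym2.eq_swap]) hpS
      hS'.insert_of_deleteEdges (by rwa [Sym2.eq_swap])).some.exists_isTight
  have hpQ : ∀ i, p ∉ ((Q.mono (G.deleteEdges_le _)).walk i).support := fun i hp => by
    rw [DisjointPaths.support_walk_mono] at hp
    refine hpB (hQ.mem_reachAvoiding (Set.subset_insert _ _) hp fun h => ?_)
    exact (show p ∈ insert q S from h ▸ Q.tgt_mem i).elim hpq.ne hpS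
  obtain ⟨Q', hQ', hQ'Q⟩ := (hQ.mono (G.deleteEdges_le _)).exists_extend hpq.symm hqS hpQ
  refine (hP.mono (G.deleteEdges_le _)).glue hQ' ((Set.ncard_insert_le p S).trans (by omega))
    fun i j z hzP hzQ => ?_
  rw [DisjointPaths.support_walk_mono] at hzP
  rcases hQ'Q j z hzQ with hzQ | rfl
  · rw [DisjointPaths.support_walk_mono] at hzQ
    by_contra hz
    have hzA := hP.mem_reachAvoiding (Set.subset_insert _ _) hzP fun h => hz (h ▸ P.tgt_mem i)
    refine Set.disjoint_left.1 hdisj hzA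
      (hQ.mem_reachAvoiding (Set.subset_insert _ _) hzQ fun h => ?_)
    rcases (h ▸ Q.tgt_mem j : z ∈ insert q S) with rfl | hzS
    · exact hqA hzA
    · exact hz (Set.mem_insert_of_mem _ hzS)
  · exact Set.mem_insert _ _

theorem menger [Finite V] (G : SimpleGraph V) (A B : Set V) (k : ℕ)
    (h : ∀ S, G.Separates S A B → k ≤ S.ncard) : Nonempty (G.DisjointPaths A B k) := by
  induction G using WellFoundedLT.induction generalizing A B with
  | ind G ih =>
  by_cases hE : ∃ p q, G.Adj p q
  swap
  · push Not at hE
    refine DisjointPaths.nonempty_of_le_ncard_inter (h _ fun a ha b hb w => ?_)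
    cases w with
    | nil => exact ⟨a, Walk.start_mem_support _, ha, hb⟩
    | cons hadj _ => exact absurd hadj (hE _ _)
  obtain ⟨p, q, hpq⟩ := hE
  have hlt : G.deleteEdges {s(p, q)} < G := lt_of_le_of_ne (G.deleteEdges_le _) fun heq => by
    have h' : (G.deleteEdges {s(p, q)}).Adj p q := by rwa [heq]
    simp at h'
  by_cases hS : ∀ S, (G.deleteEdges {s(p, q)}).Separates S A B → k ≤ S.ncard
  · exact (ih _ hlt A B hS).map (·.mono (G.deleteEdges_le _))
  push Not at hS
  obtain ⟨S, hS, hSk⟩ := hS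
  have hnS : ¬ G.Separates S A B := fun h' => (h S h').not_gt hSk
  rcases exists_reachAvoiding_of_not_separates hpq.ne hS hnS with ⟨hpA, hqB⟩ | ⟨hqA, hpB⟩
  · exact menger_step hpq hS hSk hpA hqB h (ih _ hlt)
  · rw [Sym2.eq_swap] at hS hqA hpB hlt
    exact menger_step hpq.symm hS hSk hqA hpB h (ih _ hlt)

end SimpleGraph

section LocalMenger

variable {G : SimpleGraph V} {k : ℕ} {a b x y : V}

lemma connK_of_adj (h : G.Adj x y) (k : ℕ) : ConnK G k x y := by
  refine ⟨fun _ => h.toWalk, fun _ => h.isPath_toWalk, fun _ _ _ z hz _ => ?_⟩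
  simpa using hz

lemma delV_le (G : SimpleGraph V) (x : V) : delV G x ≤ G := fun _ _ h => h.1

lemma notMem_support_delV : ∀ {a b : V} (w : (delV G x).Walk a b), a ≠ x → x ∉ w.support
  | _, _, .nil, ha => by simpa using ha.symm
  | _, _, .cons h w, ha => by
    rw [Walk.support_cons, List.mem_cons, not_or]
    exact ⟨ha.symm, notMem_support_delV w h.2.2⟩

lemma edges_subset_edgeSet_delV {w : G.Walk a b} (hx : x ∉ w.support) :
    ∀ e ∈ w.edges, e ∈ (delV G x).edgeSet := by
  intro e he
  induction e using Sym2.ind with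
  | _ c d =>
    exact ⟨w.adj_of_mem_edges he, fun h => hx (h ▸ w.fst_mem_support_of_mem_edges he),
      fun h => hx (h ▸ w.snd_mem_support_of_mem_edges he)⟩

/-- An `x`–`y` path, shorn of its end vertices, runs in `G - x - y` from one neighbourhood to
the other. -/
lemma separates_of_separates_neighborSet {T : Set V} (hxy : x ≠ y) (hnadj : ¬G.Adj x y)
    (hT : (delV (delV G x) y).Separates T (G.neighborSet x) (G.neighborSet y)) :
    G.Separates (T \ {x, y}) {x} {y} := by
  classical
  intro a ha b hb w
  rw [Set.mem_singleton_iff] at ha hb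
  subst a b
  obtain ⟨c, hxc, w₁, hw⟩ := Walk.exists_eq_cons_of_ne hxy w.bypass
  have hcy : c ≠ y := fun h => hnadj (h ▸ hxc)
  obtain ⟨d, hyd, w₂, hw₂⟩ := Walk.exists_eq_cons_of_ne hcy.symm w₁.reverse
  have hpath₁ : (Walk.cons hxc w₁).IsPath := hw ▸ w.bypass_isPath
  have hx : x ∉ w₁.support := ((Walk.cons_isPath_iff _ _).1 hpath₁).2
  have hpath₂ : (Walk.cons hyd w₂).IsPath := hw₂ ▸ hpath₁.of_cons.reverse
  have hy : y ∉ w₂.reverse.support := by simpa using ((Walk.cons_isPath_iff _ _).1 hpath₂).2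
  have hsub : ∀ z ∈ w₂.reverse.support, z ∈ w₁.support := fun z hz => by
    have : z ∈ w₁.reverse.support := by rw [hw₂]; simp_all
    simpa using this
  have hx' : x ∉ w₂.reverse.support := fun h => hx (hsub x h)
  let M := (w₂.reverse.transfer _ (edges_subset_edgeSet_delV hx')).transfer _
    (edges_subset_edgeSet_delV (by simpa using hy))
  obtain ⟨t, ht, htT⟩ := hT c hxc d hyd M
  simp only [M, Walk.support_transfer] at ht
  refine ⟨t, w.support_bypass_subset_support ?_, htT, ?_⟩
  · rw [hw, Walk.support_cons]
    exact List.mem_cons_of_mem _ (hsub t ht)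
  · rintro (rfl | rfl)
    exacts [hx' ht, hy ht]

lemma connK_of_forall_separates [Finite V] (hxy : x ≠ y) (hnadj : ¬G.Adj x y)
    (h : ∀ S, x ∉ S → y ∉ S → G.Separates S {x} {y} → k ≤ S.ncard) : ConnK G k x y := by
  obtain ⟨P⟩ := menger (delV (delV G x) y) (G.neighborSet x) (G.neighborSet y) k fun T hT =>
    (h _ (by simp) (by simp) (separates_of_separates_neighborSet hxy hnadj hT)).trans
      (Set.ncard_le_ncard Set.sdiff_subset)
  have hxs : ∀ i, G.Adj x (P.src i) := P.src_mem
  have hty : ∀ i, G.Adj (P.tgt i) y := fun i => (P.tgt_mem i).symm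
  have hsrc : ∀ i, P.src i ≠ x ∧ P.src i ≠ y := fun i =>
    ⟨(hxs i).ne.symm, fun h => hnadj (h ▸ hxs i)⟩
  have hy : ∀ i, y ∉ (P.walk i).support := fun i => notMem_support_delV _ (hsrc i).2
  have hx : ∀ i, x ∉ (P.walk i).support := fun i => by
    simpa using notMem_support_delV ((P.walk i).mapLe (delV_le _ y)) (hsrc i).1
  let F i : G.Walk x y :=
    .cons (hxs i) (((P.walk i).mapLe ((delV_le _ y).trans (delV_le G x))).concat (hty i))
  have hF : ∀ i z, z ∈ (F i).support ↔ z = x ∨ z ∈ (P.walk i).support ∨ z = y := by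
    intro i z
    simp only [F, Walk.support_cons, Walk.support_concat, Walk.support_mapLe_eq_support]
    simp
  refine ⟨F, fun i => ?_, fun i j hij z hzi hzj => ?_⟩
  · refine (((P.isPath i).mapLe _).concat ?_ _).cons ?_
    · simpa using hy i
    · simpa [Walk.support_concat, hxy] using hx i
  · rw [hF] at hzi hzj
    rcases hzi with hz | hz | hz
    · exact .inl hz
    · rcases hzj with rfl | hz' | rfl
      exacts [.inl rfl, (P.disjoint hij hz hz').elim, .inr rfl]
    · exact .inr hz

lemma ThreeConnected.connK (hG : ThreeConnected G) (hxy : x ≠ y) : ConnK G 3 x y := by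
  have : Finite V := Nat.finite_of_card_ne_zero (by have := hG.1; omega)
  by_cases hadj : G.Adj x y
  · exact connK_of_adj hadj 3
  refine connK_of_forall_separates hxy hadj fun S hx hy hS => ?_
  by_contra! hS3
  obtain ⟨w⟩ := (hG.2 S (by omega)).preconnected ⟨x, hx⟩ ⟨y, hy⟩
  obtain ⟨s, hs, hsS⟩ := hS x rfl y rfl (w.map (Embedding.induce Sᶜ).toHom)
  obtain ⟨z, -, rfl⟩ := List.mem_map.1 ((Walk.support_map _ _) ▸ hs)
  exact z.2 hsS

end LocalMenger

section Suppress

variable {G H : SimpleGraph V} {k : ℕ}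

lemma neighborSet_eq_of_vdeg_eq_two {w a b : V} (hw : vdeg G w = 2) (hab : a ≠ b)
    (h : {a, b} ⊆ G.neighborSet w) : G.neighborSet w = {a, b} :=
  (Set.eq_of_subset_of_ncard_le h (by rw [Set.ncard_pair hab]; exact hw.le)
    (Set.finite_of_ncard_ne_zero (by rw [← vdeg, hw]; simp))).symm

/-- Two consecutive interior vertices of the path would be adjacent vertices of degree 2. -/
lemma suppress_adj_cases (hind : ∀ a b, vdeg G a = 2 → vdeg G b = 2 → ¬G.Adj a b)
    {a b : {v // vdeg G v ≠ 2}} (h : (suppress G).Adj a b) :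
    G.Adj a b ∨ ∃ w, vdeg G w = 2 ∧ G.Adj a w ∧ G.Adj w b := by
  obtain ⟨hne, p, hp, hint⟩ := h
  obtain ⟨c, h₁, p, rfl⟩ := Walk.exists_eq_cons_of_ne (fun h => hne (Subtype.ext h)) p
  cases p with
  | nil => exact .inl h₁
  | @cons _ d _ h₂ p =>
    have hnd := hp.support_nodup
    simp only [Walk.support_cons, List.nodup_cons, List.mem_cons, not_or] at hnd
    have hc : vdeg G c = 2 := hint c (by simp) h₁.ne.symm
      fun h => hnd.2.1 (h ▸ p.end_mem_support)
    have hda : d ≠ a.1 := fun h => hnd.1.2 (h ▸ p.start_mem_support)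
    cases p with
    | nil => exact .inr ⟨c, hc, h₁, h₂⟩
    | @cons _ e _ h₃ p =>
      have hdb : d ≠ b.1 := fun h =>
        ((Walk.cons_isPath_iff _ _).1 hp.of_cons.of_cons).2 (h ▸ p.end_mem_support)
      exact absurd h₂ (hind c d hc (hint d (by simp) hda hdb))

lemma exists_walk_of_suppress_walk (hind : ∀ a b, vdeg G a = 2 → vdeg G b = 2 → ¬G.Adj a b)
    {a b : {v // vdeg G v ≠ 2}} (W : (suppress G).Walk a b) :
    ∃ T : G.Walk a b, ∀ z ∈ T.support, z ∈ W.support.map Subtype.val ∨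
      (vdeg G z = 2 ∧ ∀ n ∈ G.neighborSet z, n ∈ W.support.map Subtype.val) := by
  induction W with
  | nil => exact ⟨.nil, by simp⟩
  | @cons a c b h W ih =>
    obtain ⟨T, hT⟩ := ih
    have hT' : ∀ z ∈ T.support, z ∈ (Walk.cons h W).support.map Subtype.val ∨
        (vdeg G z = 2 ∧ ∀ n ∈ G.neighborSet z, n ∈ (Walk.cons h W).support.map Subtype.val) := by
      intro z hz
      simp only [Walk.support_cons, List.map_cons, List.mem_cons]
      exact (hT z hz).imp .inr fun h => ⟨h.1, fun n hn => .inr (h.2 n hn)⟩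
    have hc : c.1 ∈ W.support.map Subtype.val := List.mem_map_of_mem W.start_mem_support
    rcases suppress_adj_cases hind h with hac | ⟨w, hw, haw, hwc⟩
    · refine ⟨.cons hac T, fun z hz => ?_⟩
      rw [Walk.support_cons, List.mem_cons] at hz
      rcases hz with rfl | hz
      exacts [.inl (by simp), hT' z hz]
    · refine ⟨.cons haw (.cons hwc T), fun z hz => ?_⟩
      rw [Walk.support_cons, Walk.support_cons, List.mem_cons, List.mem_cons] at hz
      rcases hz with rfl | rfl | hz
      · exact .inl (by simp)
      · refine .inr ⟨hw, fun n hn => ?_⟩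
        have hac : a.1 ≠ c.1 := fun h' => h.1 (Subtype.ext h')
        rw [neighborSet_eq_of_vdeg_eq_two hw hac (Set.pair_subset haw.symm hwc)] at hn
        rcases hn with rfl | rfl
        · exact List.mem_map_of_mem (Walk.start_mem_support _)
        · exact List.mem_map_of_mem (by simp)
      · exact hT' z hz

lemma ConnK.of_suppress (hind : ∀ a b, vdeg G a = 2 → vdeg G b = 2 → ¬G.Adj a b)
    {x y : {v // vdeg G v ≠ 2}} (hmid : ¬∃ w, vdeg G w = 2 ∧ G.Adj w x ∧ G.Adj w y)
    (h : ConnK (suppress G) k x y) : ConnK G k x y := by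
  classical
  obtain ⟨P, -, hP⟩ := h
  choose T hT using fun i => exists_walk_of_suppress_walk hind (P i)
  refine ⟨fun i => (T i).bypass, fun i => (T i).bypass_isPath, fun i j hij z hzi hzj => ?_⟩
  have hcommon : ∀ n, n ∈ (P i).support.map Subtype.val → n ∈ (P j).support.map Subtype.val →
      n = x ∨ n = y := by
    simp only [List.mem_map]
    rintro n ⟨c, hc, rfl⟩ ⟨c', hc', hcc'⟩
    have := Subtype.ext hcc'
    subst c'
    exact (hP i j hij c hc hc').imp (congrArg _) (congrArg _)
  have hdeg : ∀ l : List {v // vdeg G v ≠ 2}, z ∈ l.map Subtype.val → vdeg G z ≠ 2 := by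
    simp only [List.mem_map]
    rintro l ⟨c, -, rfl⟩
    exact c.2
  rcases hT i z ((T i).support_bypass_subset_support hzi) with hz | ⟨hz2, hN⟩ <;>
    rcases hT j z ((T j).support_bypass_subset_support hzj) with hz' | ⟨hz2', hN'⟩
  · exact hcommon z hz hz'
  · exact absurd hz2' (hdeg _ hz)
  · exact absurd hz2 (hdeg _ hz')
  · refine absurd ⟨z, hz2, ?_⟩ hmid
    have hsub : G.neighborSet z ⊆ {x.1, y.1} := fun n hn => hcommon n (hN n hn) (hN' n hn)
    have hNz : G.neighborSet z = {x.1, y.1} := Set.eq_of_subset_of_ncard_le hsub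
      ((Set.ncard_insert_le _ _).trans (by rw [Set.ncard_singleton]; exact hz2.ge))
      (Set.toFinite _)
    exact ⟨show x.1 ∈ G.neighborSet z by simp [hNz], show y.1 ∈ G.neighborSet z by simp [hNz]⟩

lemma ConnK.of_common_neighbor {x y w : V} (hK : ConnK H k x y) (hxy : x ≠ y)
    (hxw : G.Adj x w) (hwy : G.Adj w y)
    (hHG : ∀ a b, H.Adj a b → a ≠ w → b ≠ w → G.Adj a b) : ConnK G k x y := by
  obtain ⟨P, hPpath, hPdisj⟩ := hK
  have hmid : (Walk.cons hxw (Walk.cons hwy .nil)).IsPath := by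
    simp [Walk.isPath_def, hxw.ne, hwy.ne, hxy]
  have hrep : ∀ i, ∃ p : G.Walk x y, p.IsPath ∧
      (w ∈ (P i).support ∧ p.support = [x, w, y] ∨
        w ∉ (P i).support ∧ p.support = (P i).support) := by
    intro i
    by_cases hw : w ∈ (P i).support
    · exact ⟨_, hmid, .inl ⟨hw, rfl⟩⟩
    · refine ⟨(P i).transfer G fun e he => ?_, (hPpath i).transfer _, .inr ⟨hw, by simp⟩⟩
      induction e using Sym2.ind with
      | _ a b =>
        exact hHG a b ((P i).adj_of_mem_edges he)
          (fun h => hw (h ▸ (P i).fst_mem_support_of_mem_edges he))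
          (fun h => hw (h ▸ (P i).snd_mem_support_of_mem_edges he))
  choose p hp hsupp using hrep
  refine ⟨p, hp, fun i j hij z hzi hzj => ?_⟩
  have hmid_inter : ∀ l : List V, z ∈ [x, w, y] → z ∈ l → w ∉ l → z = x ∨ z = y := by
    simp only [List.mem_cons, List.not_mem_nil, or_false]
    rintro l (rfl | rfl | rfl) hz hw
    exacts [.inl rfl, absurd hz hw, .inr rfl]
  rcases hsupp i with ⟨hwi, hi⟩ | ⟨hwi, hi⟩ <;> rcases hsupp j with ⟨hwj, hj⟩ | ⟨hwj, hj⟩ <;>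
    rw [hi] at hzi <;> rw [hj] at hzj
  · exact ((hPdisj i j hij w hwi hwj).elim hxw.ne.symm hwy.ne).elim
  · exact hmid_inter _ hzi hzj hwj
  · exact hmid_inter _ hzj hzi hwi
  · exact hPdisj i j hij z hzi hzj

lemma vdeg_deleteEdges {u v w : V} (hu : w ≠ u) (hv : w ≠ v) :
    vdeg (G.deleteEdges {s(u, v)}) w = vdeg G w := by
  unfold vdeg
  congr 1
  ext z
  simp [hu, hv]

end Suppress

/-- In a (simple) contracted minimal `Q`-triconnected graph, any edge
neither of whose endpoints is a terminal is nonremovable. -/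
theorem stmt_8 (H : SimpleGraph V) (Q : Set V)
    (hmin : MinQR H Q (fun _ => 3)) (hcontracted : ∀ w : V, vdeg H w ≠ 2)
    (u v : V) (huv : H.Adj u v) (hu : u ∉ Q) (hv : v ∉ Q) :
    ¬ Removable H u v := by
  intro hrem
  set G := H.deleteEdges {s(u, v)} with hG
  obtain ⟨x, hx, y, hy, hxy, hxyG⟩ : ∃ x ∈ Q, ∃ y ∈ Q, x ≠ y ∧ ¬ConnK G 3 x y := by
    simpa [QRConn] using hmin.2.1 _ huv
  have hdeg2 : ∀ w, vdeg G w = 2 → w = u ∨ w = v := fun w hw => by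
    by_contra! h
    exact hcontracted w (vdeg_deleteEdges h.1 h.2 ▸ hw)
  by_cases hmid : ∃ w, vdeg G w = 2 ∧ G.Adj w x ∧ G.Adj w y
  · obtain ⟨w, hw, hwx, hwy⟩ := hmid
    have hK : ConnK H 3 x y := by simpa using hmin.1 x hx y hy hxy
    refine hxyG (hK.of_common_neighbor hxy hwx.symm hwy fun a b hab ha hb => ?_)
    rcases hdeg2 w hw with rfl | rfl <;> simp [hG, hab, ha, hb]
  · have hind : ∀ a b, vdeg G a = 2 → vdeg G b = 2 → ¬G.Adj a b := fun a b ha hb => by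
      rcases hdeg2 a ha with rfl | rfl <;> rcases hdeg2 b hb with rfl | rfl <;> simp [hG]
    have hQdeg : ∀ z ∈ Q, vdeg G z ≠ 2 := fun z hz => by
      rw [vdeg_deleteEdges (ne_of_mem_of_not_mem hz hu) (ne_of_mem_of_not_mem hz hv)]
      exact hcontracted z
    exact hxyG ((ThreeConnected.connK hrem (x := ⟨x, hQdeg x hx⟩) (y := ⟨y, hQdeg y hy⟩)
      (by simpa using hxy)).of_suppress hind hmid)
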